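/- In the triangular setting, define the projector P(t) = [[P^A(t), R(t)],[0, P^B(t)]] on ℝⁿ × ℝᵐ, where R(t) = X(t,0)R(0)Y(0,t) + ∫₀ᵗ X(t,τ)[C(τ)P^B(τ) − P^A(τ)C(τ)]Y(τ,t)dτ with R(0) = 𝓛P^B(0), and 𝓛η = −∫₀^∞ (I−P^A(0))X(0,τ)C(τ)Y(τ,0)η dτ. Then P(t) is invariant for the evolution operator T(t,s) = [[X(t,s), W(t,s)],[0, Y(t,s)]] of the triangular system, i.e. T(t,s)P(s) = P(t)T(t,s) for all t, s ≥ 0; equivalently, R(t)Y(t,s) + P^A(t)W(t,s) = W(t,s)P^B(s) + X(t,s)R(s) for all t, s ≥ 0. -/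
import Mathlib


open MeasureTheory Filter

noncomputable section

/-- `T` is the evolution operator of the linear system `x' = A(t) x`. -/
def IsEvolution {E : Type*} [NormedAddCommGroup E] [NormedSpace ℝ E]
    (A : ℝ → E →L[ℝ] E) (T : ℝ → ℝ → E →L[ℝ] E) : Prop :=
  (∀ s : ℝ, T s s = ContinuousLinearMap.id ℝ E) ∧
  (∀ t r s : ℝ, (T t r).comp (T r s) = T t s) ∧
  (∀ (s : ℝ) (x : E) (t : ℝ), HasDerivAt (fun r => T r s x) (A t (T t s x)) t)

/-- `(K e^{ε s}, γ)`-nonuniform exponential dichotomy on `[0,∞)` with projections `P`. -/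
def NonuniformED {E : Type*} [NormedAddCommGroup E] [NormedSpace ℝ E]
    (T : ℝ → ℝ → E →L[ℝ] E) (P : ℝ → E →L[ℝ] E) (K ε γ : ℝ) : Prop :=
  1 ≤ K ∧ 0 ≤ ε ∧ ε < γ ∧
  (∀ t : ℝ, 0 ≤ t → (P t).comp (P t) = P t) ∧
  (∀ t s : ℝ, 0 ≤ t → 0 ≤ s → (T t s).comp (P s) = (P t).comp (T t s)) ∧
  (∀ s t : ℝ, 0 ≤ s → s ≤ t →
    ‖(T t s).comp (P s)‖ ≤ K * Real.exp (-γ * (t - s)) * Real.exp (ε * s)) ∧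
  (∀ t s : ℝ, 0 ≤ t → t ≤ s →
    ‖(T t s).comp (ContinuousLinearMap.id ℝ E - P s)‖ ≤ K * Real.exp (-γ * (s - t)) * Real.exp (ε * s))

/-- Nonuniform exponential contraction: dichotomy with `P = I`. -/
def NonuniformContraction {E : Type*} [NormedAddCommGroup E] [NormedSpace ℝ E]
    (T : ℝ → ℝ → E →L[ℝ] E) (K ε γ : ℝ) : Prop :=
  NonuniformED T (fun _ => ContinuousLinearMap.id ℝ E) K ε γ

/-- Half `(M e^{δ s}, ν)`-nonuniform bounded growth on `[0,∞)`. -/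
def HalfNBG {E : Type*} [NormedAddCommGroup E] [NormedSpace ℝ E]
    (T : ℝ → ℝ → E →L[ℝ] E) (M δ ν : ℝ) : Prop :=
  1 ≤ M ∧ 0 ≤ δ ∧ 0 < ν ∧
  ∀ s t : ℝ, 0 ≤ s → s ≤ t → ‖T t s‖ ≤ M * Real.exp (ν * (t - s)) * Real.exp (δ * s)

/-- Nonuniform exponential dichotomy spectrum of the system with evolution operator `T`. -/
def NonuniformSpectrum {E : Type*} [NormedAddCommGroup E] [NormedSpace ℝ E]
    (T : ℝ → ℝ → E →L[ℝ] E) : Set ℝ :=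
  {l : ℝ | ¬ ∃ P K ε γ, NonuniformED (fun t s => Real.exp (-l * (t - s)) • T t s) P K ε γ}

/-- Piecewise continuity: on each compact interval, continuity off a finite set. -/
def PiecewiseContinuous {E : Type*} [TopologicalSpace E] (ω : ℝ → E) : Prop :=
  ∀ a b : ℝ, ∃ s : Finset ℝ, ContinuousOn ω (Set.Icc a b \ ↑s)

/-- Global nonuniform asymptotic stability of the trivial solution of `x' = g(t,x)`. -/
def GloballyNonuniformlyAsymptoticallyStable {E : Type*} [NormedAddCommGroup E]
    [NormedSpace ℝ E] (g : ℝ → E → E) : Prop :=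
  (∀ t₀ : ℝ, 0 ≤ t₀ → ∀ η > (0:ℝ), ∃ δ > (0:ℝ), ∀ x : ℝ → E,
    (∀ t, t₀ ≤ t → HasDerivAt x (g t (x t)) t) → ‖x t₀‖ < δ →
      ∀ t, t₀ ≤ t → ‖x t‖ < η) ∧
  (∀ t₀ : ℝ, 0 ≤ t₀ → ∀ x : ℝ → E,
    (∀ t, t₀ ≤ t → HasDerivAt x (g t (x t)) t) → Tendsto x atTop (nhds 0))

/-- Operator norm with parametrized norm `ND s` on the domain and `NC t` on the codomain. -/
def pNorm {V W : Type*} [NormedAddCommGroup V] [NormedSpace ℝ V]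
    [NormedAddCommGroup W] [NormedSpace ℝ W]
    (ND : ℝ → V → ℝ) (NC : ℝ → W → ℝ) (s t : ℝ) (U : V →L[ℝ] W) : ℝ :=
  sSup {r : ℝ | ∃ x : V, x ≠ 0 ∧ r = NC t (U x) / ND s x}

/-- `N t` is a norm for each `t` (triangle inequality and absolute homogeneity). -/
def IsNormFamily {V : Type*} [NormedAddCommGroup V] [NormedSpace ℝ V]
    (N : ℝ → V → ℝ) : Prop :=
  (∀ t x y, N t (x + y) ≤ N t x + N t y) ∧ ∀ (t : ℝ) (c : ℝ) (x : V), N t (c • x) = |c| * N t x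

/-- The block upper triangular operator `[[A, C], [0, B]]` on `E × F`. -/
def blockUpper {E F : Type*} [NormedAddCommGroup E] [NormedSpace ℝ E]
    [NormedAddCommGroup F] [NormedSpace ℝ F]
    (A : E →L[ℝ] E) (B : F →L[ℝ] F) (C : F →L[ℝ] E) : (E × F) →L[ℝ] (E × F) :=
  ((A.comp (ContinuousLinearMap.fst ℝ E F)) + (C.comp (ContinuousLinearMap.snd ℝ E F))).prod
    (B.comp (ContinuousLinearMap.snd ℝ E F))

/-- Evolution operator of the scalar equation `x' = a(t) x`. -/
def scalarEvol (a : ℝ → ℝ) (t s : ℝ) : ℝ →L[ℝ] ℝ :=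
  Real.exp (∫ τ in s..t, a τ) • (1 : ℝ →L[ℝ] ℝ)


/-- The off-diagonal block `W(t,s) = ∫ₛᵗ X(t,τ)C(τ)Y(τ,s)dτ` of the evolution operator
of the triangular system. -/
def Wop {E F : Type*} [NormedAddCommGroup E] [NormedSpace ℝ E]
    [NormedAddCommGroup F] [NormedSpace ℝ F]
    (X : ℝ → ℝ → E →L[ℝ] E) (Y : ℝ → ℝ → F →L[ℝ] F) (C : ℝ → F →L[ℝ] E)
    (t s : ℝ) : F →L[ℝ] E :=
  ∫ τ in s..t, (X t τ).comp ((C τ).comp (Y τ s))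

/-- The linking operator `𝓛 = −∫₀^∞ (I−P^A(0))X(0,τ)C(τ)Y(τ,0)dτ`. -/
def Lop {E F : Type*} [NormedAddCommGroup E] [NormedSpace ℝ E]
    [NormedAddCommGroup F] [NormedSpace ℝ F]
    (X : ℝ → ℝ → E →L[ℝ] E) (Y : ℝ → ℝ → F →L[ℝ] F) (C : ℝ → F →L[ℝ] E)
    (PA : ℝ → E →L[ℝ] E) : F →L[ℝ] E :=
  -(∫ τ in Set.Ioi (0:ℝ), (ContinuousLinearMap.id ℝ E - PA 0).comp
      ((X 0 τ).comp ((C τ).comp (Y τ 0))))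

/-- `R(t) = X(t,0)𝓛P^B(0)Y(0,t) + ∫₀ᵗ X(t,τ)[C(τ)P^B(τ) − P^A(τ)C(τ)]Y(τ,t)dτ`. -/
def RopVar {E F : Type*} [NormedAddCommGroup E] [NormedSpace ℝ E]
    [NormedAddCommGroup F] [NormedSpace ℝ F]
    (X : ℝ → ℝ → E →L[ℝ] E) (Y : ℝ → ℝ → F →L[ℝ] F) (C : ℝ → F →L[ℝ] E)
    (PA : ℝ → E →L[ℝ] E) (PB : ℝ → F →L[ℝ] F) (t : ℝ) : F →L[ℝ] E :=
  ((X t 0).comp ((Lop X Y C PA).comp (PB 0))).comp (Y 0 t) +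
    ∫ τ in (0:ℝ)..t, (X t τ).comp
      ((((C τ).comp (PB τ)) - ((PA τ).comp (C τ))).comp (Y τ t))

section Helpers

variable {E F G H : Type*} [NormedAddCommGroup E] [NormedSpace ℝ E]
    [NormedAddCommGroup F] [NormedSpace ℝ F]
    [NormedAddCommGroup G] [NormedSpace ℝ G]
    [NormedAddCommGroup H] [NormedSpace ℝ H]

lemma blockUpper_comp (A A' : E →L[ℝ] E) (B B' : F →L[ℝ] F) (C C' : F →L[ℝ] E) :
    (blockUpper A B C).comp (blockUpper A' B' C') =
      blockUpper (A.comp A') (B.comp B') (A.comp C' + C.comp B') := by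
  ext z <;>
    simp [blockUpper, map_add]

variable [CompleteSpace E] [CompleteSpace F] [CompleteSpace G]

lemma II_post (U : F →L[ℝ] G) {f : ℝ → E →L[ℝ] F} {a b : ℝ}
    (hf : IntervalIntegrable f volume a b) :
    IntervalIntegrable (fun τ => U.comp (f τ)) volume a b :=
  ⟨(ContinuousLinearMap.compL ℝ E F G U).integrable_comp hf.1,
    (ContinuousLinearMap.compL ℝ E F G U).integrable_comp hf.2⟩

lemma II_pre (V : G →L[ℝ] E) {f : ℝ → E →L[ℝ] F} {a b : ℝ}
    (hf : IntervalIntegrable f volume a b) :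
    IntervalIntegrable (fun τ => (f τ).comp V) volume a b :=
  ⟨((ContinuousLinearMap.compL ℝ G E F).flip V).integrable_comp hf.1,
    ((ContinuousLinearMap.compL ℝ G E F).flip V).integrable_comp hf.2⟩

lemma intInt_post (U : F →L[ℝ] G) {f : ℝ → E →L[ℝ] F} {a b : ℝ}
    (hf : IntervalIntegrable f volume a b) :
    U.comp (∫ τ in a..b, f τ) = ∫ τ in a..b, U.comp (f τ) :=
  ((ContinuousLinearMap.compL ℝ E F G U).intervalIntegral_comp_comm hf).symm

lemma intInt_pre (V : G →L[ℝ] E) {f : ℝ → E →L[ℝ] F} {a b : ℝ}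
    (hf : IntervalIntegrable f volume a b) :
    (∫ τ in a..b, f τ).comp V = ∫ τ in a..b, (f τ).comp V :=
  (((ContinuousLinearMap.compL ℝ G E F).flip V).intervalIntegral_comp_comm hf).symm

end Helpers

/-- the projector `P(t) = [[P^A(t), R(t)],[0, P^B(t)]]` is invariant for
the evolution operator `T(t,s) = [[X(t,s), W(t,s)],[0, Y(t,s)]]` of the triangular
system: `T(t,s)P(s) = P(t)T(t,s)` for all `t, s ≥ 0`. -/
theorem projector_invariance {n m : ℕ}
    (A : ℝ → EuclideanSpace ℝ (Fin n) →L[ℝ] EuclideanSpace ℝ (Fin n))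
    (B : ℝ → EuclideanSpace ℝ (Fin m) →L[ℝ] EuclideanSpace ℝ (Fin m))
    (C : ℝ → EuclideanSpace ℝ (Fin m) →L[ℝ] EuclideanSpace ℝ (Fin n))
    (hC : MeasureTheory.LocallyIntegrable C MeasureTheory.volume)
    (X : ℝ → ℝ → EuclideanSpace ℝ (Fin n) →L[ℝ] EuclideanSpace ℝ (Fin n))
    (Y : ℝ → ℝ → EuclideanSpace ℝ (Fin m) →L[ℝ] EuclideanSpace ℝ (Fin m))
    (hX : IsEvolution A X) (hY : IsEvolution B Y)
    (PA : ℝ → EuclideanSpace ℝ (Fin n) →L[ℝ] EuclideanSpace ℝ (Fin n))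
    (PB : ℝ → EuclideanSpace ℝ (Fin m) →L[ℝ] EuclideanSpace ℝ (Fin m))
    -- the diagonal systems have nonuniform exponential dichotomies with invariant
    -- projections `P^A`, `P^B` (ensuring convergence of the linking integral)
    (K ε α K' ε' α' : ℝ)
    (hdX : NonuniformED X PA K ε α) (hdY : NonuniformED Y PB K' ε' α')
    -- integrability of the integrands involved
    (hL : MeasureTheory.IntegrableOn
      (fun τ => (ContinuousLinearMap.id ℝ _ - PA 0).comp
        ((X 0 τ).comp ((C τ).comp (Y τ 0)))) (Set.Ioi (0:ℝ)) MeasureTheory.volume)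
    (hW : ∀ t s : ℝ, IntervalIntegrable
      (fun τ => (X t τ).comp ((C τ).comp (Y τ s))) MeasureTheory.volume s t)
    (hR : ∀ t s : ℝ, IntervalIntegrable
      (fun τ => (X t τ).comp ((((C τ).comp (PB τ)) - ((PA τ).comp (C τ))).comp (Y τ s)))
      MeasureTheory.volume s t) :
    ∀ t s : ℝ, 0 ≤ t → 0 ≤ s →
      (blockUpper (X t s) (Y t s) (Wop X Y C t s)).comp
          (blockUpper (PA s) (PB s) (RopVar X Y C PA PB s)) =
        (blockUpper (PA t) (PB t) (RopVar X Y C PA PB t)).comp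
          (blockUpper (X t s) (Y t s) (Wop X Y C t s)) := by
  intro t s ht hs
  set D : ℝ → (EuclideanSpace ℝ (Fin m) →L[ℝ] EuclideanSpace ℝ (Fin n)) :=
    fun τ => ((C τ).comp (PB τ)) - ((PA τ).comp (C τ)) with hD
  set g : ℝ → (EuclideanSpace ℝ (Fin m) →L[ℝ] EuclideanSpace ℝ (Fin n)) :=
    fun τ => (X t τ).comp ((D τ).comp (Y τ s)) with hg
  obtain ⟨-, cocX, -⟩ := hX
  obtain ⟨-, cocY, -⟩ := hY
  have invX : ∀ a b : ℝ, 0 ≤ a → 0 ≤ b → (X a b).comp (PA b) = (PA a).comp (X a b) :=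
    hdX.2.2.2.2.1
  have invY : ∀ a b : ℝ, 0 ≤ a → 0 ≤ b → (Y a b).comp (PB b) = (PB a).comp (Y a b) :=
    hdY.2.2.2.2.1
  set R0 : EuclideanSpace ℝ (Fin m) →L[ℝ] EuclideanSpace ℝ (Fin n) :=
    (Lop X Y C PA).comp (PB 0) with hR0
  -- integrability of `g` on the three intervals
  have hg_ts : IntervalIntegrable g volume s t := hR t s
  have hg_0t : IntervalIntegrable g volume 0 t := by
    have h := II_pre (Y 0 s) (hR t 0)
    have : (fun τ => ((X t τ).comp ((D τ).comp (Y τ 0))).comp (Y 0 s)) = g := by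
      funext τ
      simp only [hg, ContinuousLinearMap.comp_assoc, cocY]
    rwa [this] at h
  have hg_0s : IntervalIntegrable g volume 0 s := by
    have h := II_pre (Y 0 s) (II_post (X t s) (hR s 0))
    have : (fun τ => ((X t s).comp ((X s τ).comp ((D τ).comp (Y τ 0)))).comp (Y 0 s)) = g := by
      funext τ
      simp only [hg, ← ContinuousLinearMap.comp_assoc, cocX]
      simp only [ContinuousLinearMap.comp_assoc, cocY]
    rwa [this] at h
  -- integrability of the RopVar integrands
  have hf_s : IntervalIntegrable
      (fun τ => (X s τ).comp ((D τ).comp (Y τ s))) volume 0 s := by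
    have h := II_pre (Y 0 s) (hR s 0)
    have : (fun τ => ((X s τ).comp ((D τ).comp (Y τ 0))).comp (Y 0 s)) =
        (fun τ => (X s τ).comp ((D τ).comp (Y τ s))) := by
      funext τ
      simp only [ContinuousLinearMap.comp_assoc, cocY]
    rwa [this] at h
  have hf_t : IntervalIntegrable
      (fun τ => (X t τ).comp ((D τ).comp (Y τ t))) volume 0 t := by
    have h := II_pre (Y 0 t) (hR t 0)
    have : (fun τ => ((X t τ).comp ((D τ).comp (Y τ 0))).comp (Y 0 t)) =
        (fun τ => (X t τ).comp ((D τ).comp (Y τ t))) := by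
      funext τ
      simp only [ContinuousLinearMap.comp_assoc, cocY]
    rwa [this] at h
  -- Step 1: X(t,s) ∘ R(s) = X(t,0) R0 Y(0,s) + ∫₀ˢ g
  have step1 : (X t s).comp (RopVar X Y C PA PB s) =
      ((X t 0).comp R0).comp (Y 0 s) + ∫ τ in (0:ℝ)..s, g τ := by
    rw [RopVar, ContinuousLinearMap.comp_add, intInt_post (X t s) hf_s]
    congr 1
    · rw [← ContinuousLinearMap.comp_assoc, ← ContinuousLinearMap.comp_assoc, cocX,
        ContinuousLinearMap.comp_assoc]
    · refine intervalIntegral.integral_congr fun τ _ => ?_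
      simp only [hg, ← ContinuousLinearMap.comp_assoc, cocX]
  -- Step 2: R(t) ∘ Y(t,s) = X(t,0) R0 Y(0,s) + ∫₀ᵗ g
  have step2 : (RopVar X Y C PA PB t).comp (Y t s) =
      ((X t 0).comp R0).comp (Y 0 s) + ∫ τ in (0:ℝ)..t, g τ := by
    rw [RopVar, ContinuousLinearMap.add_comp, intInt_pre (Y t s) hf_t]
    congr 1
    · rw [ContinuousLinearMap.comp_assoc, cocY]
    · refine intervalIntegral.integral_congr fun τ _ => ?_
      simp only [hg, ContinuousLinearMap.comp_assoc, cocY]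
  -- Step 3: W(t,s) ∘ P^B(s) − P^A(t) ∘ W(t,s) = ∫ₛᵗ g
  have step3 : (Wop X Y C t s).comp (PB s) =
      (PA t).comp (Wop X Y C t s) + ∫ τ in s..t, g τ := by
    rw [Wop, intInt_pre (PB s) (hW t s), intInt_post (PA t) (hW t s),
      ← intervalIntegral.integral_add (II_post (PA t) (hW t s)) hg_ts]
    refine intervalIntegral.integral_congr fun τ hτ => ?_
    have hτ0 : 0 ≤ τ := by
      rcases Set.mem_uIcc.1 hτ with h | h
      · exact le_trans hs h.1
      · exact le_trans ht h.1
    have e1 : (Y τ s).comp (PB s) = (PB τ).comp (Y τ s) := invY τ s hτ0 hs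
    have e2 : (PA t).comp (X t τ) = (X t τ).comp (PA τ) := (invX t τ ht hτ0).symm
    simp only [hg, hD, ContinuousLinearMap.sub_comp, ContinuousLinearMap.comp_sub,
      ContinuousLinearMap.comp_assoc, e1]
    rw [← ContinuousLinearMap.comp_assoc (PA t), e2]
    simp only [ContinuousLinearMap.comp_assoc]
    abel
  have hsplit : (∫ τ in (0:ℝ)..s, g τ) + ∫ τ in s..t, g τ = ∫ τ in (0:ℝ)..t, g τ :=
    intervalIntegral.integral_add_adjacent_intervals hg_0s hg_ts
  rw [blockUpper_comp, blockUpper_comp, invX t s ht hs, invY t s ht hs]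
  congr 1
  rw [step1, step2, step3, ← hsplit]
  abel

end
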